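/- Fix n ≥ 1, x₀ ∈ ℝ^{k₀}, differentiable maps h_i : ℝ^{k_{i−1}} × ℝ^m → ℝ^{k_i}, differentiable strictly positive functions q_i : ℝ^{k_{i−1}} × ℝ^m → (0,∞), and a differentiable f : ℝ^{k₁} × ⋯ × ℝ^{k_n} → ℝ. Define x_i(θ) = h_i(x_{i−1}(θ), θ) recursively, L(θ) = ∏_{i=1}^n q_i(x_{i−1}(θ), θ), and adjoint row vectors λ_n^T = ∂f/∂x_n, λ_{i−1}^T = ∂f/∂x_{i−1} + λ_i^T ∂h_i/∂x_{i−1} + f(x₁(θ),…,x_n(θ)) · ∂(log q_i)/∂x_{i−1} for i = n,…,2 (derivatives of f evaluated at (x₁(θ),…,x_n(θ)), those of h_i and q_i at (x_{i−1}(θ), θ)). Define ĝ(θ)^T = Σ_{i=1}^n [ f(x₁(θ),…,x_n(θ)) · ∂(log q_i)/∂θ + λ_i^T ∂h_i/∂θ ]. Then the gradient of θ ↦ f(x₁(θ),…,x_n(θ)) · L(θ) equals ĝ(θ)^T · L(θ). -/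

import Mathlib

/-!
Write `D_i = ∂x_i/∂θ`; the chain rule gives `D_0 = 0` and `D_i = ∂ₓh_i D_{i-1} + ∂_θh_i`.
Since `L = exp (∑ log q_i(x_{i-1}, θ))`, the Leibniz rule gives
`∇(f·L) = L · (∑ ∂f/∂x_i D_i + f ∑ (∂ₓ log q_i D_{i-1} + ∂_θ log q_i))`.
Substituting `∂_θh_i = D_i - ∂ₓh_i D_{i-1}` and summing by parts with the adjoint recursion
turns `∑ λ_i ∂_θh_i` into `∑ ∂f/∂x_i D_i + f ∑ ∂ₓ log q_i D_{i-1}`; this eliminates every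
`D_i` and leaves `L · ĝ`.
-/

section

open ContinuousLinearMap

variable {𝕜 : Type*} [NontriviallyNormedField 𝕜]
  {W : Type*} [NormedAddCommGroup W] [NormedSpace 𝕜 W]
  {E : Type*} [NormedAddCommGroup E] [NormedSpace 𝕜 E]
  {F : Type*} [NormedAddCommGroup F] [NormedSpace 𝕜 F]

theorem HasFDerivAt.comp_prodMk_id {h : E × W → F} {h' : E × W →L[𝕜] F} {g : W → E}
    {g' : W →L[𝕜] E} {θ : W} (hh : HasFDerivAt h h' (g θ, θ)) (hg : HasFDerivAt g g' θ) :
    HasFDerivAt (fun θ => h (g θ, θ))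
      ((h'.comp (inl 𝕜 E W)).comp g' + h'.comp (inr 𝕜 E W)) θ := by
  refine (HasFDerivAt.comp (f := fun θ => (g θ, θ)) θ hh
    (hg.prodMk (hasFDerivAt_id θ))).congr_fderiv ?_
  ext w
  simp [← comp_inl_add_comp_inr h' (g' w, w)]

theorem fderiv_update_eq_comp_single {ι : Type*} [Fintype ι] [DecidableEq ι]
    {E : ι → Type*} [∀ i, NormedAddCommGroup (E i)] [∀ i, NormedSpace 𝕜 (E i)]
    {f : (∀ i, E i) → F} {y : ∀ i, E i} (hf : DifferentiableAt 𝕜 f y) (i : ι) :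
    fderiv 𝕜 (fun v => f (Function.update y i v)) (y i)
      = (fderiv 𝕜 f y).comp (single 𝕜 E i) := by
  have hfy : HasFDerivAt f (fderiv 𝕜 f y) (Function.update y i (y i)) := by
    rw [Function.update_eq_self]; exact hf.hasFDerivAt
  refine (hfy.comp (y i) (hasFDerivAt_update y (y i))).fderiv.trans ?_
  congr 1
  ext v j
  rcases eq_or_ne j i with rfl | hji <;> simp [*]

theorem fderiv_comp_pi_eq_sum {ι : Type*} [Fintype ι] [DecidableEq ι]
    {E : ι → Type*} [∀ i, NormedAddCommGroup (E i)] [∀ i, NormedSpace 𝕜 (E i)]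
    {f : (∀ i, E i) → F} {y : ∀ i, E i} (hf : DifferentiableAt 𝕜 f y)
    (D : ∀ i, W →L[𝕜] E i) :
    (fderiv 𝕜 f y).comp (pi D)
      = ∑ i, (fderiv 𝕜 (fun v => f (Function.update y i v)) (y i)).comp (D i) := by
  ext w
  simp [fderiv_update_eq_comp_single hf, ← map_sum, Finset.univ_sum_single]

end

theorem hasFDerivAt_finset_prod_of_log {W : Type*} [NormedAddCommGroup W] [NormedSpace ℝ W]
    {ι : Type*} (s : Finset ι) {g : ι → W → ℝ} {g' : ι → W →L[ℝ] ℝ} {θ : W}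
    (hpos : ∀ i ∈ s, ∀ θ, 0 < g i θ)
    (hg : ∀ i ∈ s, HasFDerivAt (fun θ => Real.log (g i θ)) (g' i) θ) :
    HasFDerivAt (fun θ => ∏ i ∈ s, g i θ) ((∏ i ∈ s, g i θ) • ∑ i ∈ s, g' i) θ := by
  have hexp (θ : W) : ∏ i ∈ s, g i θ = Real.exp (∑ i ∈ s, Real.log (g i θ)) := by
    rw [Real.exp_sum]
    exact Finset.prod_congr rfl fun i hi => (Real.exp_log (hpos i hi θ)).symm
  simp only [hexp]
  exact (HasFDerivAt.fun_sum hg).exp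

section

open ContinuousLinearMap

variable {𝕜 : Type*} [NontriviallyNormedField 𝕜]
  {W : Type*} [NormedAddCommGroup W] [NormedSpace 𝕜 W]
  {G : Type*} [NormedAddCommGroup G] [NormedSpace 𝕜 G]
  {E : ℕ → Type*} [∀ i, NormedAddCommGroup (E i)] [∀ i, NormedSpace 𝕜 (E i)]

theorem differentiable_of_succ_eq {x : ∀ i, W → E i} {h : ∀ i, E i × W → E (i + 1)}
    (hx0 : Differentiable 𝕜 (x 0)) (hh : ∀ i, Differentiable 𝕜 (h i))
    (hxs : ∀ i θ, x (i + 1) θ = h i (x i θ, θ)) (i : ℕ) : Differentiable 𝕜 (x i) := by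
  induction i with
  | zero => exact hx0
  | succ i ih => rw [funext (hxs i)]; exact (hh i).comp (ih.prodMk differentiable_id)

theorem sum_adjoint_comp_eq (n : ℕ) (hn : 1 ≤ n) (D : ∀ i, W →L[𝕜] E i)
    (A : ∀ i, E i →L[𝕜] E (i + 1)) (B : ∀ i, W →L[𝕜] E (i + 1))
    (c : (j : Fin n) → E (j.1 + 1) →L[𝕜] G) (lam : ∀ i, E (i + 1) →L[𝕜] G)
    (s : ∀ i, E i →L[𝕜] G)
    (hD0 : D 0 = 0) (hD : ∀ i, D (i + 1) = (A i).comp (D i) + B i)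
    (htop : lam (n - 1) = c ⟨n - 1, Nat.sub_one_lt_of_lt hn⟩)
    (hrec : ∀ j (hj : j + 1 < n),
      lam j = c ⟨j, Nat.lt_of_succ_lt hj⟩ + (lam (j + 1)).comp (A (j + 1)) + s (j + 1)) :
    ∑ j : Fin n, (lam j).comp (B j)
      = ∑ j : Fin n, (c j).comp (D (j.1 + 1)) + ∑ j : Fin n, (s j).comp (D j) := by
  obtain ⟨N, rfl⟩ : ∃ N, n = N + 1 := ⟨n - 1, by omega⟩
  have htop' : lam N = c (Fin.last N) := htop
  -- the adjoint recursion says `λ_{i-1} D_i = c_{i-1} D_i + w i` for `0 < i ≤ N`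
  set w : ℕ → W →L[𝕜] G := fun i => (lam i).comp ((A i).comp (D i)) + (s i).comp (D i)
  have step (j : ℕ) (hj : j < N + 1) : (lam j).comp (B j) + (lam j).comp ((A j).comp (D j))
      = (c ⟨j, hj⟩).comp (D (j + 1)) + if j < N then w (j + 1) else 0 := by
    rw [← comp_add, add_comm (B j), ← hD]
    split_ifs with hjN
    · rw [hrec j (by omega)]
      simp only [w, add_comp, comp_assoc]
      abel
    · obtain rfl : j = N := by omega
      rw [htop', add_zero]
      rfl
  have shift :
      ∑ j : Fin (N + 1), (if j.1 < N then w (j.1 + 1) else 0) = ∑ j : Fin (N + 1), w j := by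
    rw [Fin.sum_univ_castSucc, Fin.sum_univ_succ]
    simp [w, hD0]
  have hsum := Fintype.sum_congr _ _ fun j : Fin (N + 1) => step j.1 j.2
  simp only [Finset.sum_add_distrib, shift, w] at hsum
  rw [← add_left_inj (∑ j : Fin (N + 1), (lam j).comp ((A j).comp (D j))), hsum]
  abel

end

/-- Indices are shifted by one against the paper: `h i`, `q i` and `lam i` are the paper's
`h_{i+1}`, `q_{i+1}` and `λ_{i+1}`, and `X θ j = x_{j+1}(θ)`. -/
theorem stmt_1
    (n m : ℕ) (hn : 1 ≤ n) (k : ℕ → ℕ)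
    (x₀ : EuclideanSpace ℝ (Fin (k 0)))
    (h : (i : ℕ) → EuclideanSpace ℝ (Fin (k i)) × EuclideanSpace ℝ (Fin m) →
      EuclideanSpace ℝ (Fin (k (i + 1))))
    (f : ((j : Fin n) → EuclideanSpace ℝ (Fin (k (j.1 + 1)))) → ℝ)
    (q : (i : ℕ) → EuclideanSpace ℝ (Fin (k i)) × EuclideanSpace ℝ (Fin m) → ℝ)
    (hh : ∀ i, Differentiable ℝ (h i))
    (hf : Differentiable ℝ f)
    (hq_pos : ∀ i v, 0 < q i v)
    (hq : ∀ i, Differentiable ℝ (q i))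
    (x : (i : ℕ) → EuclideanSpace ℝ (Fin m) → EuclideanSpace ℝ (Fin (k i)))
    (hx0 : ∀ θ, x 0 θ = x₀)
    (hxs : ∀ i θ, x (i + 1) θ = h i (x i θ, θ))
    (X : EuclideanSpace ℝ (Fin m) → (j : Fin n) → EuclideanSpace ℝ (Fin (k (j.1 + 1))))
    (hX : ∀ θ j, X θ j = x (j.1 + 1) θ)
    (L : EuclideanSpace ℝ (Fin m) → ℝ)
    (hL : ∀ θ, L θ = ∏ j : Fin n, q j.1 (x j.1 θ, θ))
    (lam : (j : ℕ) → EuclideanSpace ℝ (Fin m) →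
      (EuclideanSpace ℝ (Fin (k (j + 1))) →L[ℝ] ℝ))
    (hlam_top : ∀ θ, lam (n - 1) θ =
      fderiv ℝ (fun v => f (Function.update (X θ) ⟨n - 1, by omega⟩ v))
        (X θ ⟨n - 1, by omega⟩))
    (hlam_rec : ∀ θ (j : ℕ) (hj : j + 1 < n), lam j θ =
      fderiv ℝ (fun v => f (Function.update (X θ) ⟨j, by omega⟩ v)) (X θ ⟨j, by omega⟩)
      + (lam (j + 1) θ).comp
          ((fderiv ℝ (h (j + 1)) (x (j + 1) θ, θ)).comp (ContinuousLinearMap.inl ℝ _ _))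
      + f (X θ) • ((fderiv ℝ (fun v => Real.log (q (j + 1) v)) (x (j + 1) θ, θ)).comp
          (ContinuousLinearMap.inl ℝ _ _)))
    (ghat : EuclideanSpace ℝ (Fin m) → (EuclideanSpace ℝ (Fin m) →L[ℝ] ℝ))
    (hghat : ∀ θ, ghat θ = ∑ j : Fin n,
      (f (X θ) • ((fderiv ℝ (fun v => Real.log (q j.1 v)) (x j.1 θ, θ)).comp
          (ContinuousLinearMap.inr ℝ _ _))
        + (lam j.1 θ).comp
            ((fderiv ℝ (h j.1) (x j.1 θ, θ)).comp (ContinuousLinearMap.inr ℝ _ _)))) :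
    ∀ θ, HasFDerivAt (fun θ' => f (X θ') * L θ') (L θ • ghat θ) θ := by
  intro θ
  have hxd := differentiable_of_succ_eq (funext hx0 ▸ differentiable_const x₀) hh hxs
  have hD0 : fderiv ℝ (x 0) θ = 0 := by rw [funext hx0]; exact fderiv_const_apply x₀
  have hD (i : ℕ) : HasFDerivAt (x (i + 1))
      (((fderiv ℝ (h i) (x i θ, θ)).comp (ContinuousLinearMap.inl ℝ _ _)).comp
          (fderiv ℝ (x i) θ)
        + (fderiv ℝ (h i) (x i θ, θ)).comp (ContinuousLinearMap.inr ℝ _ _)) θ := by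
    rw [funext (hxs i)]
    exact (hh i _).hasFDerivAt.comp_prodMk_id (hxd i θ).hasFDerivAt
  have hXd : HasFDerivAt X (ContinuousLinearMap.pi fun j => fderiv ℝ (x (j.1 + 1)) θ) θ := by
    rw [show X = fun θ' (j : Fin n) => x (j.1 + 1) θ' from funext fun θ' => funext (hX θ')]
    exact hasFDerivAt_pi.2 fun j => (hxd _ θ).hasFDerivAt
  have hfX : HasFDerivAt (fun θ' => f (X θ'))
      (∑ j : Fin n, (fderiv ℝ (fun v => f (Function.update (X θ) j v)) (X θ j)).comp
        (fderiv ℝ (x (j.1 + 1)) θ)) θ := by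
    rw [← fderiv_comp_pi_eq_sum (hf _)]
    exact (hf _).hasFDerivAt.comp θ hXd
  have hLd : HasFDerivAt L (L θ • ∑ j : Fin n,
      (((fderiv ℝ (fun v => Real.log (q j.1 v)) (x j.1 θ, θ)).comp
            (ContinuousLinearMap.inl ℝ _ _)).comp (fderiv ℝ (x j.1) θ)
        + (fderiv ℝ (fun v => Real.log (q j.1 v)) (x j.1 θ, θ)).comp
            (ContinuousLinearMap.inr ℝ _ _))) θ := by
    rw [funext hL]
    refine hasFDerivAt_finset_prod_of_log _ (fun _ _ _ => hq_pos _ _) fun j _ => ?_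
    exact (((hq j).log fun v => (hq_pos j v).ne') _).hasFDerivAt.comp_prodMk_id
      (hxd j θ).hasFDerivAt
  have htel := sum_adjoint_comp_eq n hn (fun i => fderiv ℝ (x i) θ)
    (fun i => (fderiv ℝ (h i) (x i θ, θ)).comp (ContinuousLinearMap.inl ℝ _ _))
    (fun i => (fderiv ℝ (h i) (x i θ, θ)).comp (ContinuousLinearMap.inr ℝ _ _))
    (fun j => fderiv ℝ (fun v => f (Function.update (X θ) j v)) (X θ j)) (fun j => lam j θ)
    (fun i => f (X θ) •
      (fderiv ℝ (fun v => Real.log (q i v)) (x i θ, θ)).comp (ContinuousLinearMap.inl ℝ _ _))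
    hD0 (fun i => (hD i).fderiv) (hlam_top θ) (hlam_rec θ)
  refine (hfX.mul hLd).congr_fderiv ?_
  rw [hghat θ, Finset.sum_add_distrib, Finset.sum_add_distrib, htel]
  simp only [ContinuousLinearMap.smul_comp, ← Finset.smul_sum]
  module
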